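/- Let σ ⊂ ℝ^m be a lattice simplex of dimension d with vertices x_0, ..., x_d, viewed as points of ℝ^{m+1} with last coordinate 1. Then every lattice point y in the interior of the cone C(σ) can be written as y = z + w where z is an interior lattice point of C(σ) of degree (last coordinate) at most d+1 and w is a nonnegative integer combination of the lattice points of σ × {1}. In particular, rdeg y ≤ d+1 for all y ∈ M*(σ). -/

import Mathlib

open Set

noncomputable section

/-- Lift a point of `ℝ^m` to height 1 in `ℝ^(m+1)`. -/
def lift {m : ℕ} (x : Fin m → ℝ) : Fin (m + 1) → ℝ := Fin.snoc x 1

/-- A point with integer coordinates (a lattice point). -/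
def isLat {n : ℕ} (x : Fin n → ℝ) : Prop := ∀ i, ∃ z : ℤ, x i = (z : ℝ)

/-- The cone `C(P)` generated by `P × {1}` (for convex `P`). -/
def coneOf {m : ℕ} (P : Set (Fin m → ℝ)) : Set (Fin (m + 1) → ℝ) :=
  {y | ∃ (c : ℝ) (p : Fin m → ℝ), 0 ≤ c ∧ p ∈ P ∧ y = c • lift p}

/-- The semigroup `M(P)` generated by the lattice points of `P × {1}`. -/
def Msemi {m : ℕ} (P : Set (Fin m → ℝ)) : AddSubmonoid (Fin (m + 1) → ℝ) :=
  AddSubmonoid.closure {y | ∃ p ∈ P, isLat p ∧ y = lift p}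

/-- `M*(P)`: the lattice points in the relative interior of `C(P)`. -/
def Mstar {m : ℕ} (P : Set (Fin m → ℝ)) : Set (Fin (m + 1) → ℝ) :=
  {y | y ∈ intrinsicInterior ℝ (coneOf P) ∧ isLat y}

/-- The degree: the last coordinate. -/
def deg {m : ℕ} (y : Fin (m + 1) → ℝ) : ℝ := y (Fin.last m)

/-- The reduced `P`-degree of `y`. -/
def rdeg {m : ℕ} (P : Set (Fin m → ℝ)) (y : Fin (m + 1) → ℝ) : ℝ :=
  sInf {r | ∃ z w, z ∈ Mstar P ∧ w ∈ Msemi P ∧ y = z + w ∧ r = deg z}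

/-- An empty lattice simplex: its only lattice points are its vertices. -/
def IsEmptyLatticeSimplex {m : ℕ} (s : Set (Fin m → ℝ)) : Prop :=
  ∃ (k : ℕ) (x : Fin (k + 1) → (Fin m → ℝ)), AffineIndependent ℝ x ∧
    (∀ i, isLat (x i)) ∧ s = convexHull ℝ (Set.range x) ∧
    (∀ p ∈ s, isLat p → p ∈ Set.range x)

/-- A lattice triangulation of `P`: a finite face-closed family of empty lattice
simplices covering `P`, with pairwise disjoint relative interiors (every point of `P`
lies in the relative interior of exactly one simplex), and using every lattice point
of `P` as a vertex. -/
structure IsLatticeTriangulation {m : ℕ} (P : Set (Fin m → ℝ))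
    (T : Set (Set (Fin m → ℝ))) : Prop where
  finite : T.Finite
  simplex : ∀ s ∈ T, IsEmptyLatticeSimplex s
  subset : ∀ s ∈ T, s ⊆ P
  partition : ∀ p ∈ P, ∃! s, s ∈ T ∧ p ∈ intrinsicInterior ℝ s
  vertex : ∀ p ∈ P, isLat p → {p} ∈ T

/-! The lifted vertices `(xᵢ, 1)` are linearly independent, so `C(σ)` is the injective linear
image of the nonnegative orthant and its relative interior is the image of the open orthant:
`y ∈ M*(σ)` is `∑ cᵢ (xᵢ, 1)` with all `cᵢ > 0`. Splitting `cᵢ = nᵢ + rᵢ` with `nᵢ ∈ ℕ` and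
`rᵢ ∈ (0, 1]` gives `w = ∑ nᵢ (xᵢ, 1) ∈ M(σ)` and `z = y - w = ∑ rᵢ (xᵢ, 1) ∈ M*(σ)`, of degree
`∑ rᵢ ≤ d + 1`. -/

section Lift

variable {m : ℕ} {ι : Type*} [Fintype ι]

@[simp]
lemma lift_last (p : Fin m → ℝ) : lift p (Fin.last m) = 1 := by
  simp [lift]

@[simp]
lemma lift_castSucc (p : Fin m → ℝ) (j : Fin m) : lift p j.castSucc = p j := by
  simp [lift]

lemma isLat_lift {p : Fin m → ℝ} (hp : isLat p) : isLat (lift p) := by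
  intro j
  induction j using Fin.lastCases with
  | last => exact ⟨1, by simp⟩
  | cast j => simpa using hp j

lemma lift_linearCombination (x : ι → Fin m → ℝ) {t : ι → ℝ} (ht : ∑ i, t i = 1) :
    lift (Fintype.linearCombination ℝ x t) = Fintype.linearCombination ℝ (lift ∘ x) t := by
  funext j
  induction j using Fin.lastCases with
  | last => simp [Fintype.linearCombination_apply, Finset.sum_apply, ht]
  | cast j => simp [Fintype.linearCombination_apply, Finset.sum_apply]

lemma deg_linearCombination_lift (x : ι → Fin m → ℝ) (c : ι → ℝ) :
    deg (Fintype.linearCombination ℝ (lift ∘ x) c) = ∑ i, c i := by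
  simp [deg, Fintype.linearCombination_apply, Finset.sum_apply]

lemma AffineIndependent.linearIndependent_lift {x : ι → Fin m → ℝ}
    (hx : AffineIndependent ℝ x) : LinearIndependent ℝ (lift ∘ x) := by
  rw [Fintype.linearIndependent_iff]
  intro g hg
  have hsum : ∑ i, g i = 0 := by
    simpa [Finset.sum_apply] using congrFun hg (Fin.last m)
  have hcomb : ∑ i, g i • x i = 0 := by
    funext j
    simpa [Finset.sum_apply] using congrFun hg j.castSucc
  exact fun i => affineIndependent_iff.1 hx Finset.univ g hsum hcomb i (Finset.mem_univ i)

end Lift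

section Lattice

variable {n : ℕ}

lemma isLat_zero : isLat (0 : Fin n → ℝ) :=
  fun _ => ⟨0, by simp⟩

lemma isLat_add {a b : Fin n → ℝ} (ha : isLat a) (hb : isLat b) : isLat (a + b) := by
  intro j
  obtain ⟨k, hk⟩ := ha j
  obtain ⟨l, hl⟩ := hb j
  exact ⟨k + l, by simp [hk, hl]⟩

lemma isLat_sub {a b : Fin n → ℝ} (ha : isLat a) (hb : isLat b) : isLat (a - b) := by
  intro j
  obtain ⟨k, hk⟩ := ha j
  obtain ⟨l, hl⟩ := hb j
  exact ⟨k - l, by simp [hk, hl]⟩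

lemma isLat_of_mem_Msemi {m : ℕ} {P : Set (Fin m → ℝ)} {y : Fin (m + 1) → ℝ}
    (hy : y ∈ Msemi P) : isLat y := by
  induction hy using AddSubmonoid.closure_induction with
  | mem _ hy =>
    obtain ⟨p, -, hp, rfl⟩ := hy
    exact isLat_lift hp
  | zero => exact isLat_zero
  | add _ _ _ _ ha hb => exact isLat_add ha hb

lemma lift_mem_Msemi {m : ℕ} {P : Set (Fin m → ℝ)} {p : Fin m → ℝ} (hp : p ∈ P)
    (hlat : isLat p) : lift p ∈ Msemi P :=
  AddSubmonoid.subset_closure ⟨p, hp, hlat, rfl⟩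

lemma linearCombination_lift_natCast_mem_Msemi {m : ℕ} {ι : Type*} [Fintype ι]
    {P : Set (Fin m → ℝ)} {x : ι → Fin m → ℝ} (hxP : ∀ i, x i ∈ P) (hxlat : ∀ i, isLat (x i))
    (k : ι → ℕ) : Fintype.linearCombination ℝ (lift ∘ x) (fun i => (k i : ℝ)) ∈ Msemi P := by
  simp only [Fintype.linearCombination_apply, Nat.cast_smul_eq_nsmul]
  exact AddSubmonoid.sum_mem _ fun i _ =>
    AddSubmonoid.nsmul_mem _ (lift_mem_Msemi (hxP i) (hxlat i)) _

end Lattice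

section IntrinsicInterior

variable {E F : Type*} [NormedAddCommGroup E] [NormedSpace ℝ E]
  [NormedAddCommGroup F] [NormedSpace ℝ F]

lemma intrinsicInterior_eq_interior_of_affineSpan_eq_top {s : Set E}
    (hs : affineSpan ℝ s = ⊤) : intrinsicInterior ℝ s = interior s := by
  refine Subset.antisymm ?_ interior_subset_intrinsicInterior
  have hopen : IsOpen (affineSpan ℝ s : Set E) := by
    rw [hs, AffineSubspace.top_coe]
    exact isOpen_univ
  exact (hopen.isOpenMap_subtype_val.image_interior_subset _).trans
    (interior_mono (image_preimage_subset _ _))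

lemma LinearMap.intrinsicInterior_image_of_injective [FiniteDimensional ℝ E] (f : E →ₗ[ℝ] F)
    (hf : Function.Injective f) (s : Set E) :
    intrinsicInterior ℝ (f '' s) = f '' intrinsicInterior ℝ s := by
  let e := (LinearEquiv.ofInjective f hf).toContinuousLinearEquiv.toContinuousAffineEquiv
  let incl := (LinearMap.range f).subtypeₗᵢ.toAffineIsometry
  have hfac : ∀ t : Set E, f '' t = incl '' (e '' t) := fun t => by
    rw [image_image]
    rfl
  rw [hfac, hfac, AffineIsometry.intrinsicInterior_image,
    ContinuousAffineEquiv.intrinsicInterior_image]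

end IntrinsicInterior

lemma convexHull_range_eq_image_stdSimplex {ι E : Type*} [Fintype ι] [AddCommGroup E]
    [Module ℝ E] (x : ι → E) :
    convexHull ℝ (range x) = Fintype.linearCombination ℝ x '' stdSimplex ℝ ι := by
  classical
  rw [← convexHull_rangle_single_eq_stdSimplex, LinearMap.image_convexHull, ← range_comp]
  congr
  funext i
  simp

section Cone

variable {m : ℕ} {ι : Type*} [Fintype ι] [Nonempty ι]

lemma exists_eq_smul_mem_stdSimplex {c : ι → ℝ} (hc : 0 ≤ c) :
    ∃ a : ℝ, 0 ≤ a ∧ ∃ t ∈ stdSimplex ℝ ι, c = a • t := by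
  rcases (Finset.sum_nonneg fun i _ => hc i).eq_or_lt with hsum | hsum
  · have hc0 : c = 0 := funext fun i =>
      (Finset.sum_eq_zero_iff_of_nonneg fun i _ => hc i).1 hsum.symm i (Finset.mem_univ i)
    classical
    obtain ⟨i⟩ := ‹Nonempty ι›
    exact ⟨0, le_rfl, Pi.single i 1, single_mem_stdSimplex ℝ i, by simp [hc0]⟩
  · refine ⟨∑ i, c i, hsum.le, (∑ i, c i)⁻¹ • c, ⟨fun i => ?_, ?_⟩, ?_⟩
    · exact mul_nonneg (inv_nonneg.2 hsum.le) (hc i)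
    · simp [← Finset.mul_sum, inv_mul_cancel₀ hsum.ne']
    · rw [smul_smul, mul_inv_cancel₀ hsum.ne', one_smul]

lemma coneOf_convexHull_range (x : ι → Fin m → ℝ) :
    coneOf (convexHull ℝ (range x)) =
      Fintype.linearCombination ℝ (lift ∘ x) '' Ici 0 := by
  ext y
  simp only [coneOf, convexHull_range_eq_image_stdSimplex, mem_ofPred_eq, mem_image, mem_Ici]
  constructor
  · rintro ⟨a, _, ha, ⟨t, ht, rfl⟩, rfl⟩
    refine ⟨a • t, smul_nonneg ha fun i => ht.1 i, ?_⟩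
    rw [map_smul, lift_linearCombination x ht.2]
  · rintro ⟨c, hc, rfl⟩
    obtain ⟨a, ha, t, ht, rfl⟩ := exists_eq_smul_mem_stdSimplex hc
    exact ⟨a, _, ha, ⟨t, ht, rfl⟩, by rw [map_smul, lift_linearCombination x ht.2]⟩

lemma intrinsicInterior_coneOf_convexHull_range {x : ι → Fin m → ℝ}
    (hx : AffineIndependent ℝ x) :
    intrinsicInterior ℝ (coneOf (convexHull ℝ (range x))) =
      Fintype.linearCombination ℝ (lift ∘ x) '' univ.pi fun _ => Ioi 0 := by
  have hint : interior (Ici (0 : ι → ℝ)) = univ.pi fun _ => Ioi 0 := by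
    rw [← pi_univ_Ici, interior_pi_set finite_univ]
    simp
  have hspan : affineSpan ℝ (Ici (0 : ι → ℝ)) = ⊤ := by
    refine top_unique (le_of_eq_of_le ?_ (affineSpan_mono ℝ interior_subset))
    rw [hint]
    exact ((isOpen_set_pi finite_univ fun _ _ => isOpen_Ioi).affineSpan_eq_top
      ⟨fun _ => 1, by simp⟩).symm
  rw [coneOf_convexHull_range, LinearMap.intrinsicInterior_image_of_injective _
    hx.linearIndependent_lift.fintypeLinearCombination_injective,
    intrinsicInterior_eq_interior_of_affineSpan_eq_top hspan, hint]

end Cone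

lemma exists_nat_sub_mem_Ioc {t : ℝ} (ht : 0 < t) : ∃ n : ℕ, t - n ∈ Ioc 0 1 := by
  have hceil : 1 ≤ ⌈t⌉₊ := Nat.one_le_iff_ne_zero.2 (Nat.ceil_pos.2 ht).ne'
  refine ⟨⌈t⌉₊ - 1, ?_, ?_⟩ <;> push_cast [hceil]
  · linarith [Nat.ceil_lt_add_one ht.le]
  · linarith [Nat.le_ceil t]

/-- every `y ∈ M*(σ)` decomposes as `z + w` with `z ∈ M*(σ)` of degree
at most `d+1` and `w ∈ M(σ)`; in particular `rdeg y ≤ d + 1`. -/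
theorem stmt0 {m d : ℕ} (σ : Set (Fin m → ℝ)) (x : Fin (d + 1) → (Fin m → ℝ))
    (hx : AffineIndependent ℝ x) (hxlat : ∀ i, isLat (x i))
    (hσ : σ = convexHull ℝ (Set.range x)) :
    ∀ y ∈ Mstar σ, ∃ z w, z ∈ Mstar σ ∧ w ∈ Msemi σ ∧ y = z + w ∧ deg z ≤ d + 1 := by
  subst hσ
  rintro y ⟨hyint, hylat⟩
  rw [intrinsicInterior_coneOf_convexHull_range hx] at hyint
  obtain ⟨c, hc, rfl⟩ := hyint
  choose k hk using fun i => exists_nat_sub_mem_Ioc (hc i (mem_univ i))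
  set L := Fintype.linearCombination ℝ (lift ∘ x)
  set r : Fin (d + 1) → ℝ := fun i => c i - k i
  have hw : L (fun i => k i) ∈ Msemi (convexHull ℝ (range x)) :=
    linearCombination_lift_natCast_mem_Msemi
      (fun i => subset_convexHull ℝ _ (mem_range_self i)) hxlat k
  have hsplit : L c = L r + L (fun i => k i) := by
    rw [← map_add]
    congr
    funext i
    simp [r]
  have hz : L r ∈ Mstar (convexHull ℝ (range x)) := by
    refine ⟨?_, ?_⟩
    · rw [intrinsicInterior_coneOf_convexHull_range hx]
      exact ⟨r, fun i _ => (hk i).1, rfl⟩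
    · rw [eq_sub_of_add_eq hsplit.symm]
      exact isLat_sub hylat (isLat_of_mem_Msemi hw)
  refine ⟨L r, _, hz, hw, hsplit, ?_⟩
  calc deg (L r) = ∑ i, r i := deg_linearCombination_lift x r
    _ ≤ ∑ _i : Fin (d + 1), (1 : ℝ) := Finset.sum_le_sum fun i _ => (hk i).2
    _ = d + 1 := by simp
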